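/- For 1 ≤ i < j ≤ m, κ_r(x_i, s_{i+1}⋯s_{j-1}(x_{i+1})) = σ̄^{(r-1)}_{(n-1)(j-i)}(x_i, ..., x_j) / σ̄^{(r)}_{(n-1)(j-i-1)}(x_{i+1}, ..., x_j), where s_{i+1}⋯s_{j-1} acts via the birational R-matrix and upper indices are taken mod n. -/

import Mathlib

open Finset

noncomputable section BirationalR

/-- A vector of reals with cyclically indexed coordinates (upper index mod `n`). -/
abbrev Vec (n : ℕ) := ZMod n → ℝ

/-- `κ_r(a,b) = Σ_{j=r}^{r+n-1} (Π_{k=r+1}^{j} b_k)(Π_{k=j+1}^{r+n-1} a_k)`, indices mod `n`. -/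
def kappaF (n : ℕ) (r : ZMod n) (a b : Vec n) : ℝ :=
  ∑ d ∈ Finset.range n,
    (∏ t ∈ Finset.range d, b (r + 1 + (t : ℕ))) *
      ∏ t ∈ Finset.range (n - 1 - d), a (r + 1 + (d : ℕ) + (t : ℕ))

/-- First component `b'` of the birational R-matrix `η(a,b) = (b',a')`:
`b'_i = b_{i+1} κ_{i+1}(a,b)/κ_i(a,b)`. -/
def etaB (n : ℕ) (a b : Vec n) : Vec n :=
  fun i => b (i + 1) * kappaF n (i + 1) a b / kappaF n i a b

/-- Second component `a'` of `η(a,b) = (b',a')`: `a'_i = a_{i-1} κ_{i-1}(a,b)/κ_i(a,b)`. -/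
def etaA (n : ℕ) (a b : Vec n) : Vec n :=
  fun i => a (i - 1) * kappaF n (i - 1) a b / kappaF n i a b

/-- `η` applied to positions `(p, p+1)` of a tuple of vectors. -/
def etaAt (n : ℕ) (p : ℕ) (X : ℕ → Vec n) : ℕ → Vec n :=
  fun q => if q = p then etaB n (X p) (X (p + 1))
    else if q = p + 1 then etaA n (X p) (X (p + 1)) else X q

/-- Action of the word `s_{w₁} s_{w₂} ⋯ s_{wₗ}` (rightmost acts first). -/
def applyWord (n : ℕ) (w : List ℕ) (X : ℕ → Vec n) : ℕ → Vec n :=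
  w.foldr (etaAt n) X

/-- The tuple `(x_i, x_{i+1}, …, x_j)` as a list. -/
def seg {n : ℕ} (x : ℕ → Vec n) (i j : ℕ) : List (Vec n) :=
  (List.range (j + 1 - i)).map fun t => x (i + t)

/-- `τ_k^{(r)}(x_1,…,x_m)`: sum over weakly increasing `i_1 ≤ … ≤ i_k`, no index used
more than `n-1` times, of `x_{i_1}^{(r)} x_{i_2}^{(r-1)} ⋯ x_{i_k}^{(r-k+1)}`.
Encoded via multiplicity functions; `τ = 0` for negative `k`. -/
def tauF (n : ℕ) (r : ZMod n) (k : ℤ) (x : List (Vec n)) : ℝ :=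
  if 0 ≤ k then
    ∑ c ∈ (Fintype.piFinset fun _ : Fin x.length => Finset.range n).filter
        (fun c => ∑ i, c i = k.toNat),
      ∏ i : Fin x.length, ∏ β ∈ Finset.range (c i),
        x.get i (r - (∑ i' ∈ Finset.univ.filter (fun i' => i' < i), c i' : ℕ) - (β : ℕ))
  else 0

/-- `σ_k^{(r)}(x_1,…,x_m) = Σ_{t=0}^{k} x_1^{(r)} ⋯ x_1^{(r-t+1)} τ_{k-t}^{(r-t)}(x_2,…,x_m)`. -/
def sigmaF (n : ℕ) (r : ZMod n) (k : ℕ) : List (Vec n) → ℝ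
  | [] => if k = 0 then 1 else 0
  | y :: rest =>
      ∑ t ∈ Finset.range (k + 1),
        (∏ β ∈ Finset.range t, y (r - (β : ℕ))) * tauF n (r - (t : ℕ)) ((k : ℤ) - (t : ℤ)) rest

/-- `σ̄_k^{(r)}(x_1,…,x_m) = Σ_{t=0}^{k} τ_{k-t}^{(r)}(x_1,…,x_{m-1}) x_m^{(r-k+t)} ⋯ x_m^{(r-k+1)}`. -/
def sigmaBarF (n : ℕ) (r : ZMod n) (k : ℕ) : List (Vec n) → ℝ
  | [] => if k = 0 then 1 else 0
  | y :: rest =>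
      ∑ t ∈ Finset.range (k + 1),
        tauF n r ((k : ℤ) - (t : ℤ)) ((y :: rest).dropLast) *
          ∏ β ∈ Finset.range t,
            (y :: rest).getLast (List.cons_ne_nil y rest) (r - (k : ℕ) + 1 + (β : ℕ))

/-- `Ω_k^{(r)}(x_i,…,x_j) = Σ_{ℓ=0}^{n-1} σ^{(r)}_{(n-1)(k-i)+ℓ}(x_i,…,x_k)
σ̄^{(r+k-i-ℓ)}_{(n-1)(j-k)-ℓ}(x_{k+1},…,x_j)`. -/
def OmegaF (n : ℕ) (r : ZMod n) (k i j : ℕ) (x : ℕ → Vec n) : ℝ :=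
  ∑ ℓ ∈ Finset.range n,
    sigmaF n r ((n - 1) * (k - i) + ℓ) (seg x i k) *
      sigmaBarF n (r + (k : ℕ) - (i : ℕ) - (ℓ : ℕ)) ((n - 1) * (j - k) - ℓ) (seg x (k + 1) j)

/-- `P_k^{(r)}(x_i,…,x_j) = Σ_{t=0}^{k} (Π_{s=0}^{t-1} x_i^{(r-s)})
σ_{(n-1)(j-i-1)}^{(r-t)}(x_i,…,x_{j-1}) (Π_{s=0}^{k-t-1} x_j^{(r-t+j-i-1-s)})`. -/
def PF (n : ℕ) (r : ZMod n) (k i j : ℕ) (x : ℕ → Vec n) : ℝ :=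
  ∑ t ∈ Finset.range (k + 1),
    (∏ s ∈ Finset.range t, x i (r - (s : ℕ))) *
      sigmaF n (r - (t : ℕ)) ((n - 1) * (j - i - 1)) (seg x i (j - 1)) *
      ∏ s ∈ Finset.range (k - t), x j (r - (t : ℕ) + (j : ℕ) - (i : ℕ) - 1 - (s : ℕ))

end BirationalR

/-!
Write `y = x_i`, `ys = (x_{i+1}, …, x_{j-1})`, `z = x_j` and `d = |ys|`. The vector
`b = s_{i+1} ⋯ s_{j-1}(x_{i+1})` is `z` pushed leftwards through `ys` by `η`. By induction on
`ys`, it is a gauge transform of a shift of `z`: `b_s = z_{s+d} F(s) / F(s-1)` with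
`F(s) = σ̄^{(s)}_{(n-1)d}(ys, z)`. For such a `b` the products of consecutive `b`'s in
`κ_s(y, b)` telescope, and what remains is the expansion of `σ̄^{(s-1)}_{(n-1)(d+1)}(y, ys, z)`
in its first variable; raising the degree of `σ̄(ys, z)` beyond `(n-1)d` only contributes powers
of `z`, since `τ(ys)` vanishes there. Feeding this formula for `κ` at `s` and `s + 1` into
`η(y, b)_s = b_{s+1} κ_{s+1} / κ_s` is the inductive step.
-/

theorem sum_filter_piFinset_fin_succ {M : Type*} [AddCommMonoid M] {L : ℕ} (s : Finset ℕ)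
    (k : ℤ) (f : (Fin (L + 1) → ℕ) → M) :
    ∑ c ∈ (Fintype.piFinset fun _ : Fin (L + 1) => s).filter
        (fun c => ((∑ i, c i : ℕ) : ℤ) = k), f c =
      ∑ a ∈ s, ∑ c ∈ (Fintype.piFinset fun _ : Fin L => s).filter
        (fun c => ((∑ i, c i : ℕ) : ℤ) = k - a), f (Fin.cons a c) := by
  rw [sum_sigma']
  refine sum_bij' (fun c _ => (⟨c 0, Fin.tail c⟩ : Σ _ : ℕ, Fin L → ℕ))
    (fun p _ => Fin.cons p.1 p.2) ?_ ?_ (fun c _ => Fin.cons_self_tail c) (fun p _ => by simp)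
    (fun c _ => by rw [Fin.cons_self_tail])
  · intro c hc
    simp only [mem_filter, Fintype.mem_piFinset, Fin.sum_univ_succ] at hc
    simp only [mem_sigma, mem_filter, Fintype.mem_piFinset, Fin.tail]
    push_cast at hc ⊢
    exact ⟨hc.1 0, fun i => hc.1 i.succ, by omega⟩
  · rintro ⟨a, c⟩ hp
    simp only [mem_sigma, mem_filter, Fintype.mem_piFinset] at hp
    simp only [mem_filter, Fintype.mem_piFinset, Fin.forall_fin_succ, Fin.cons_zero,
      Fin.cons_succ, Fin.sum_univ_succ]
    push_cast at hp ⊢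
    exact ⟨⟨hp.1, hp.2.1⟩, by omega⟩

section Tau

variable {n : ℕ}

def tauWeight (r : ZMod n) (x : List (Vec n)) (c : Fin x.length → ℕ) : ℝ :=
  ∏ i : Fin x.length, ∏ β ∈ range (c i),
    x.get i (r - (∑ i' ∈ univ.filter (fun i' => i' < i), c i' : ℕ) - (β : ℕ))

theorem tauF_eq_sum_tauWeight (r : ZMod n) (k : ℤ) (x : List (Vec n)) :
    tauF n r k x =
      ∑ c ∈ (Fintype.piFinset fun _ : Fin x.length => range n).filter
        (fun c => ((∑ i, c i : ℕ) : ℤ) = k), tauWeight r x c := by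
  unfold tauF
  split_ifs with hk
  · exact sum_congr (filter_congr fun c _ => by omega) fun _ _ => rfl
  · exact (sum_eq_zero fun c hc => by have := (mem_filter.mp hc).2; omega).symm

theorem tauF_of_neg {k : ℤ} (hk : k < 0) (r : ZMod n) (x : List (Vec n)) :
    tauF n r k x = 0 := by
  simp [tauF, not_le.mpr hk]

theorem tauF_zero (hn : 0 < n) (r : ZMod n) (x : List (Vec n)) : tauF n r 0 x = 1 := by
  have hsupp : (Fintype.piFinset fun _ : Fin x.length => range n).filter
      (fun c => ((∑ i, c i : ℕ) : ℤ) = 0) = {0} := by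
    ext c
    simp only [mem_filter, Fintype.mem_piFinset, mem_range, Nat.cast_eq_zero, sum_eq_zero_iff,
      mem_univ, true_implies, mem_singleton, funext_iff, Pi.zero_apply]
    exact ⟨fun h => h.2, fun h => ⟨fun i => h i ▸ hn, h⟩⟩
  rw [tauF_eq_sum_tauWeight, hsupp, sum_singleton]
  simp [tauWeight]

theorem tauF_nonneg (r : ZMod n) (k : ℤ) {x : List (Vec n)} (hx : ∀ v ∈ x, ∀ s, 0 ≤ v s) :
    0 ≤ tauF n r k x := by
  rw [tauF_eq_sum_tauWeight]
  exact sum_nonneg fun c _ => prod_nonneg fun i _ => prod_nonneg fun β _ =>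
    hx _ (x.get_mem i) _

theorem tauF_of_lt {k : ℤ} (r : ZMod n) (x : List (Vec n))
    (hk : (((n - 1) * x.length : ℕ) : ℤ) < k) : tauF n r k x = 0 := by
  rw [tauF_eq_sum_tauWeight]
  refine sum_eq_zero fun c hc => absurd (mem_filter.mp hc).2 ?_
  have hle : ∑ i, c i ≤ (n - 1) * x.length := by
    simpa [mul_comm] using sum_le_card_nsmul univ c (n - 1) fun i _ =>
      Nat.le_sub_one_of_lt (mem_range.mp (Fintype.mem_piFinset.mp (mem_filter.mp hc).1 i))
  omega

theorem tauWeight_cons (r : ZMod n) (y : Vec n) (x : List (Vec n))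
    (c : Fin (x.length + 1) → ℕ) :
    tauWeight r (y :: x) c =
      (∏ β ∈ range (c 0), y (r - (β : ℕ))) *
        tauWeight (r - ((c 0 : ℕ) : ZMod n)) x (Fin.tail c) := by
  refine (Fin.prod_univ_succ (n := x.length) _).trans (congrArg₂ _ ?_ ?_)
  · simp only [Fin.not_lt_zero, filter_false, sum_empty, Nat.cast_zero, sub_zero]
    rfl
  · refine prod_congr rfl fun i _ => prod_congr rfl fun β _ => ?_
    have hcum : ∑ i' ∈ univ.filter (fun i' => i' < i.succ), c i' =
        c 0 + ∑ i' ∈ univ.filter (fun i' => i' < i), Fin.tail c i' := by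
      simp only [sum_filter, Fin.sum_univ_succ, Fin.succ_pos, if_true, Fin.succ_lt_succ_iff,
        Fin.tail]
    change x.get i
      (r - ((∑ i' ∈ univ.filter (fun i' => i' < i.succ), c i' : ℕ) : ZMod n) - β) = _
    rw [hcum, Nat.cast_add, sub_add_eq_sub_sub]

theorem tauF_cons (r : ZMod n) (k : ℤ) (y : Vec n) (x : List (Vec n)) :
    tauF n r k (y :: x) =
      ∑ a ∈ range n,
        (∏ β ∈ range a, y (r - (β : ℕ))) * tauF n (r - (a : ℕ)) (k - a) x := by
  rw [tauF_eq_sum_tauWeight]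
  refine (sum_filter_piFinset_fin_succ (L := x.length) _ k _).trans
    (sum_congr rfl fun a _ => ?_)
  rw [tauF_eq_sum_tauWeight, mul_sum]
  refine sum_congr rfl fun c _ => ?_
  rw [tauWeight_cons, Fin.cons_zero, Fin.tail_cons]

end Tau

section SigmaBar

variable {n : ℕ}

theorem sigmaBarF_append_singleton (r : ZMod n) (k : ℕ) (ys : List (Vec n)) (z : Vec n) :
    sigmaBarF n r k (ys ++ [z]) =
      ∑ t ∈ range (k + 1),
        tauF n r (k - t) ys * ∏ β ∈ range t, z (r - (k : ℕ) + 1 + (β : ℕ)) := by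
  obtain ⟨y, rest, h⟩ : ∃ y rest, ys ++ [z] = y :: rest :=
    ⟨_, _, (List.cons_head_tail (by simp)).symm⟩
  have hlast : ∀ hne, (y :: rest).getLast hne = z := by
    rw [← h]
    exact fun _ => List.getLast_concat ..
  rw [h, sigmaBarF]
  simp only [hlast, ← h, List.dropLast_concat]

theorem sigmaBarF_pos (hn : 0 < n) (r : ZMod n) (k : ℕ) {ys : List (Vec n)} {z : Vec n}
    (hys : ∀ v ∈ ys, ∀ s, 0 ≤ v s) (hz : ∀ s, 0 < z s) :
    0 < sigmaBarF n r k (ys ++ [z]) := by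
  rw [sigmaBarF_append_singleton]
  refine sum_pos' (fun t _ => mul_nonneg (tauF_nonneg _ _ hys)
    (prod_nonneg fun β _ => (hz _).le)) ⟨k, self_mem_range_succ k, ?_⟩
  rw [sub_self, tauF_zero hn, one_mul]
  exact prod_pos fun β _ => hz _

/-- `τ(ys)` vanishes above degree `(n - 1) * ys.length`, so only the top powers of `z`
contribute. -/
theorem sigmaBarF_add_of_le (r : ZMod n) {k : ℕ} {ys : List (Vec n)} (z : Vec n)
    (hk : (n - 1) * ys.length ≤ k) (e : ℕ) :
    sigmaBarF n r (k + e) (ys ++ [z]) =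
      (∏ β ∈ range e, z (r - ((k + e : ℕ) : ZMod n) + 1 + (β : ℕ))) *
        sigmaBarF n r k (ys ++ [z]) := by
  rw [sigmaBarF_append_singleton, sigmaBarF_append_singleton,
    show k + e + 1 = e + (k + 1) by ring, sum_range_add, mul_sum]
  rw [sum_eq_zero fun t ht => by
    rw [tauF_of_lt _ _ (by have := mem_range.mp ht; push_cast; omega), zero_mul], zero_add]
  refine sum_congr rfl fun t _ => ?_
  rw [prod_range_add, show ((k + e : ℕ) : ℤ) - (e + t : ℕ) = k - t by push_cast; ring]
  have hshift : ∀ β : ℕ, r - ((k + e : ℕ) : ZMod n) + 1 + ((e + β : ℕ) : ZMod n) =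
      r - (k : ℕ) + 1 + (β : ℕ) := fun β => by push_cast; ring
  simp only [hshift]
  ring

theorem sigmaBarF_cons_of_le (r : ZMod n) {k : ℕ} (hk : n - 1 ≤ k) (y : Vec n)
    (ys : List (Vec n)) (z : Vec n) :
    sigmaBarF n r k ((y :: ys) ++ [z]) =
      ∑ c ∈ range n, (∏ β ∈ range c, y (r - (β : ℕ))) *
        sigmaBarF n (r - (c : ℕ)) (k - c) (ys ++ [z]) := by
  simp only [sigmaBarF_append_singleton, tauF_cons, sum_mul]
  rw [sum_comm]
  refine sum_congr rfl fun c hc => ?_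
  have hck : c ≤ k := by have := mem_range.mp hc; omega
  rw [mul_sum, ← sum_subset (range_subset_range.mpr (by omega : k - c + 1 ≤ k + 1))]
  · refine sum_congr rfl fun t _ => ?_
    rw [show ((k : ℤ) - t - c) = ((k - c : ℕ) : ℤ) - t by omega,
      show r - (c : ZMod n) - ((k - c : ℕ) : ZMod n) = r - (k : ℕ) by
        rw [Nat.cast_sub hck]; ring]
    ring
  · intro t ht hnt
    rw [tauF_of_neg (by simp only [mem_range] at ht hnt; omega)]
    ring

end SigmaBar

theorem ZMod.natCast_self_sub {n a : ℕ} (ha : a ≤ n) : ((n - a : ℕ) : ZMod n) = -a := by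
  rw [Nat.cast_sub ha, ZMod.natCast_self, zero_sub]

theorem prod_range_div_of_ne_zero {K : Type*} [Field K] (f : ℕ → K) (hf : ∀ t, f t ≠ 0)
    (e : ℕ) : ∏ t ∈ range e, f (t + 1) / f t = f e / f 0 := by
  induction e with
  | zero => simp [hf 0]
  | succ e ih =>
    rw [prod_range_succ, ih]
    field_simp [hf e]

section RMatrix

variable {n : ℕ}

/-- The vector arriving at the position of the head of `ys` when `v`, standing just after `ys`,
is carried leftwards through `ys` by successive applications of `η`. -/
noncomputable def passLeft (n : ℕ) (ys : List (Vec n)) (v : Vec n) : Vec n :=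
  ys.foldr (etaB n) v

/-- The products `b_{s+1} ⋯ b_{s+e}` in `κ_s` telescope. -/
theorem kappaF_mul_div (a w F : Vec n) (hF : ∀ s, F s ≠ 0) (s : ZMod n) :
    kappaF n s a (fun t => w t * F t / F (t - 1)) =
      (∑ e ∈ range n, (∏ t ∈ range e, w (s + 1 + (t : ℕ))) * F (s + (e : ℕ)) *
        ∏ t ∈ range (n - 1 - e), a (s + 1 + (e : ℕ) + (t : ℕ))) / F s := by
  rw [kappaF, sum_div]
  refine sum_congr rfl fun e _ => ?_
  have htel : ∏ t ∈ range e, F (s + 1 + (t : ℕ)) / F (s + 1 + (t : ℕ) - 1) =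
      F (s + (e : ℕ)) / F s := by
    convert prod_range_div_of_ne_zero (fun t => F (s + (t : ℕ))) (fun _ => hF _) e using 3 <;>
      push_cast <;> ring_nf
  rw [prod_congr rfl fun _ _ => mul_div_assoc .., prod_mul_distrib, htel]
  field_simp [hF s]

/-- `sigmaBarF_cons_of_le` reindexed by `c = n - 1 - e` to match the terms of `κ`. -/
theorem sum_eq_sigmaBarF_cons (hn : 0 < n) (y z : Vec n) (ys : List (Vec n)) (s : ZMod n) :
    ∑ e ∈ range n, (∏ t ∈ range e, z (s + 1 + (t : ℕ) + ys.length)) *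
        sigmaBarF n (s + (e : ℕ)) ((n - 1) * ys.length) (ys ++ [z]) *
        ∏ t ∈ range (n - 1 - e), y (s + 1 + (e : ℕ) + (t : ℕ)) =
      sigmaBarF n (s - 1) ((n - 1) * (ys.length + 1)) ((y :: ys) ++ [z]) := by
  have hpred : ((n - 1 : ℕ) : ZMod n) = -1 := by
    rw [ZMod.natCast_self_sub hn, Nat.cast_one]
  symm
  rw [sigmaBarF_cons_of_le _ (by rw [Nat.mul_succ]; omega), ← sum_range_reflect]
  refine sum_congr rfl fun e he => ?_
  have he : e < n := mem_range.mp he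
  rw [show (n - 1) * (ys.length + 1) - (n - 1 - e) = (n - 1) * ys.length + e by
      rw [Nat.mul_succ]; omega,
    show s - 1 - ((n - 1 - e : ℕ) : ZMod n) = s + (e : ℕ) by
      rw [show n - 1 - e = n - (1 + e) by omega, ZMod.natCast_self_sub (by omega)]
      push_cast; ring,
    sigmaBarF_add_of_le _ _ le_rfl, ← prod_range_reflect _ (n - 1 - e)]
  have hz : ∀ β : ℕ,
      s + (e : ℕ) - (((n - 1) * ys.length + e : ℕ) : ZMod n) + 1 + (β : ℕ) =
      s + 1 + (β : ℕ) + ys.length := fun β => by push_cast; rw [hpred]; ring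
  have hy : ∀ β ∈ range (n - 1 - e), s - 1 - ((n - 1 - e - 1 - β : ℕ) : ZMod n) =
      s + 1 + (e : ℕ) + (β : ℕ) := fun β hβ => by
    rw [show n - 1 - e - 1 - β = n - (2 + e + β) by have := mem_range.mp hβ; omega,
      ZMod.natCast_self_sub (by have := mem_range.mp hβ; omega)]
    push_cast; ring
  simp only [hz, prod_congr rfl fun β hβ => congrArg y (hy β hβ)]
  ring

theorem kappaF_eq_sigmaBarF_div (hn : 0 < n) {y z b : Vec n} {ys : List (Vec n)}
    (hF : ∀ s, sigmaBarF n s ((n - 1) * ys.length) (ys ++ [z]) ≠ 0)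
    (hb : ∀ s, b s = z (s + ys.length) * sigmaBarF n s ((n - 1) * ys.length) (ys ++ [z]) /
      sigmaBarF n (s - 1) ((n - 1) * ys.length) (ys ++ [z])) (s : ZMod n) :
    kappaF n s y b = sigmaBarF n (s - 1) ((n - 1) * (ys.length + 1)) ((y :: ys) ++ [z]) /
      sigmaBarF n s ((n - 1) * ys.length) (ys ++ [z]) := by
  rw [funext hb, kappaF_mul_div _ (fun t => z (t + (ys.length : ZMod n)))
    (fun t => sigmaBarF n t ((n - 1) * ys.length) (ys ++ [z])) hF, ← sum_eq_sigmaBarF_cons hn]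

theorem passLeft_apply (hn : 0 < n) {z : Vec n} (hz : ∀ s, 0 < z s) (ys : List (Vec n))
    (hys : ∀ v ∈ ys, ∀ s, 0 < v s) (s : ZMod n) :
    passLeft n ys z s = z (s + ys.length) * sigmaBarF n s ((n - 1) * ys.length) (ys ++ [z]) /
      sigmaBarF n (s - 1) ((n - 1) * ys.length) (ys ++ [z]) := by
  induction ys generalizing s with
  | nil => simp [passLeft, sigmaBarF, tauF_zero hn]
  | cons y ys ih =>
    have hys' : ∀ v ∈ ys, ∀ s, 0 < v s := fun v hv => hys v (List.mem_cons_of_mem y hv)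
    have hF := fun s => (sigmaBarF_pos hn s ((n - 1) * ys.length)
      (fun v hv t => (hys' v hv t).le) hz).ne'
    have hG := fun s => (sigmaBarF_pos hn s ((n - 1) * (ys.length + 1))
      (fun v hv t => (hys v hv t).le) hz).ne'
    change passLeft n ys z (s + 1) * kappaF n (s + 1) y (passLeft n ys z) /
      kappaF n s y (passLeft n ys z) = _
    rw [kappaF_eq_sigmaBarF_div hn hF (ih hys') (s + 1),
      kappaF_eq_sigmaBarF_div hn hF (ih hys') s, ih hys' (s + 1), add_sub_cancel_right,
      List.length_cons, Nat.cast_succ, add_right_comm s 1, add_assoc]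
    field_simp [hF s, hF (s + 1), hG s, hG (s - 1)]

theorem kappaF_passLeft (hn : 0 < n) (y : Vec n) {z : Vec n} (hz : ∀ s, 0 < z s)
    {ys : List (Vec n)} (hys : ∀ v ∈ ys, ∀ s, 0 < v s) (s : ZMod n) :
    kappaF n s y (passLeft n ys z) =
      sigmaBarF n (s - 1) ((n - 1) * (ys.length + 1)) ((y :: ys) ++ [z]) /
        sigmaBarF n s ((n - 1) * ys.length) (ys ++ [z]) :=
  kappaF_eq_sigmaBarF_div hn
    (fun s => (sigmaBarF_pos hn s _ (fun v hv t => (hys v hv t).le) hz).ne')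
    (passLeft_apply hn hz ys hys) s

end RMatrix

section Words

variable {n : ℕ}

theorem applyWord_of_forall_lt (X : ℕ → Vec n) {w : List ℕ} {q : ℕ}
    (hq : ∀ p ∈ w, q < p) :
    applyWord n w X q = X q := by
  induction w with
  | nil => rfl
  | cons p w ih =>
    have hp := hq p List.mem_cons_self
    rw [applyWord, List.foldr_cons, etaAt, if_neg hp.ne, if_neg (by omega)]
    exact ih fun p' hp' => hq p' (List.mem_cons_of_mem p hp')

theorem applyWord_range'_self (X : ℕ → Vec n) (p l : ℕ) :
    applyWord n (List.range' p l) X p =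
      passLeft n ((List.range l).map fun t => X (p + t)) (X (p + l)) := by
  induction l generalizing p with
  | zero => rfl
  | succ l ih =>
    rw [List.range'_succ, applyWord, List.foldr_cons, ← applyWord, etaAt, if_pos rfl,
      applyWord_of_forall_lt X fun q hq => by rw [List.mem_range'_1] at hq; omega, ih,
      List.range_succ_eq_map, List.map_cons, List.map_map]
    simp [passLeft, Function.comp_def, add_assoc, add_comm 1]

theorem seg_eq_cons (X : ℕ → Vec n) {a b : ℕ} (hab : a ≤ b) :
    seg X a b = X a :: seg X (a + 1) b := by
  rw [seg, seg, show b + 1 - a = b + 1 - (a + 1) + 1 by omega, List.range_succ_eq_map]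
  simp [Function.comp_def, add_assoc, add_comm 1]

theorem seg_add (X : ℕ → Vec n) (a l : ℕ) :
    seg X a (a + l) = (List.range l).map (fun t => X (a + t)) ++ [X (a + l)] := by
  rw [seg, show a + l + 1 - a = l + 1 by omega, List.range_succ, List.map_append]
  rfl

end Words

theorem one_shift_dual_kappa_general (n : ℕ) (hn : 2 ≤ n) (X : ℕ → Vec n)
    (hX : ∀ p r, 0 < X p r) (i j : ℕ) (hij : i < j)
    (r : ZMod n) :
    kappaF n r (X i) (applyWord n (List.range' (i + 1) (j - 1 - i)) X (i + 1)) =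
      sigmaBarF n (r - 1) ((n - 1) * (j - i)) (seg X i j) /
        sigmaBarF n r ((n - 1) * (j - i - 1)) (seg X (i + 1) j) := by
  obtain ⟨l, rfl⟩ : ∃ l, j = i + 1 + l := ⟨j - (i + 1), by omega⟩
  have hys : ∀ v ∈ (List.range l).map (fun t => X (i + 1 + t)), ∀ s, 0 < v s := by
    simp only [List.mem_map]
    rintro v ⟨t, -, rfl⟩
    exact hX _
  rw [show i + 1 + l - 1 - i = l by omega, applyWord_range'_self,
    kappaF_passLeft (by omega) (X i) (hX _) hys, seg_eq_cons X (by omega), seg_add,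
    List.length_map, List.length_range, show i + 1 + l - i = l + 1 by omega,
    show l + 1 - 1 = l by omega, List.cons_append]

/-- for `1 ≤ i < j ≤ m`,
`κ_r(x_i, s_{i+1}⋯s_{j-1}(x_{i+1})) = σ̄^{(r-1)}_{(n-1)(j-i)}(x_i,…,x_j) /
σ̄^{(r)}_{(n-1)(j-i-1)}(x_{i+1},…,x_j)`. -/
theorem one_shift_dual_kappa (n : ℕ) (hn : 2 ≤ n) (m : ℕ) (X : ℕ → Vec n)
    (hX : ∀ p r, 0 < X p r) (i j : ℕ) (hi : 1 ≤ i) (hij : i < j) (hjm : j ≤ m)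
    (r : ZMod n) :
    kappaF n r (X i) (applyWord n (List.range' (i + 1) (j - 1 - i)) X (i + 1)) =
      sigmaBarF n (r - 1) ((n - 1) * (j - i)) (seg X i j) /
        sigmaBarF n r ((n - 1) * (j - i - 1)) (seg X (i + 1) j) :=
  one_shift_dual_kappa_general n hn X hX i j hij r
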